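/- The grounding ordinal of the disjoint union of a family of AFs equals the supremum of the grounding ordinals of the components. -/

import Mathlib

def defenseFn {A : Type*} (att : A → A → Prop) (S : Set A) : Set A :=
  {x | ∀ y, att y x → ∃ z ∈ S, att z y}

/-- `G` is the transfinite iteration of the defense function from `∅`. -/
def IsIter {A : Type*} (att : A → A → Prop) (G : Ordinal → Set A) : Prop :=
  G 0 = ∅ ∧ (∀ β : Ordinal, G (β + 1) = defenseFn att (G β)) ∧
    ∀ l : Ordinal, Order.IsSuccLimit l → G l = ⋃ β ∈ Set.Iio l, G β

/-- The attack relation of the disjoint union of a family of AFs. -/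
def sigmaAtt {ι : Type} {A : ι → Type} (att : ∀ i, A i → A i → Prop) :
    (Σ i, A i) → (Σ i, A i) → Prop :=
  fun x y => ∃ h : x.1 = y.1, att y.1 (h ▸ x.2) y.2

/-!
Every stage `G α` is contained in any stable stage, so the stable stages form the final segment
`[o, ∞)` above the grounding ordinal `o`; it is nonempty since without a stable stage the stages
would form a strictly increasing `Ordinal`-indexed family of subsets of a small type. The
iteration for the disjoint union is computed componentwise, hence a stage of the union is stable
iff it is stable in every component, and the final segment of the union is the intersection of
the final segments `[oᵢ, ∞)`, i.e. `[⨆ oᵢ, ∞)`.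
-/

lemma defenseFn_mono {A : Type*} (att : A → A → Prop) : Monotone (defenseFn att) :=
  fun _ _ hST _ hx y hy =>
    let ⟨z, hz, hzy⟩ := hx y hy
    ⟨z, hST hz, hzy⟩

universe u v

namespace IsIter

variable {A : Type v} {att : A → A → Prop} {G : Ordinal.{u} → Set A}

lemma subset_add_one (hG : IsIter att G) (α : Ordinal) : G α ⊆ G (α + 1) := by
  induction α using Ordinal.limitRecOn with
  | zero => simp [hG.1]
  | add_one β ih =>
    rw [hG.2.1 (β + 1)]
    exact (hG.2.1 β).trans_subset (defenseFn_mono att ih)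
  | limit l hl ih =>
    rw [hG.2.1 l, hG.2.2 l hl, Set.iUnion₂_subset_iff]
    intro β hβ
    calc G β ⊆ G (β + 1) := ih β hβ
      _ = defenseFn att (G β) := hG.2.1 β
      _ ⊆ defenseFn att (⋃ γ ∈ Set.Iio l, G γ) :=
        defenseFn_mono att (Set.subset_biUnion_of_mem (u := G) hβ)

lemma monotone (hG : IsIter att G) : Monotone G := by
  intro β α hβα
  induction α using Ordinal.limitRecOn with
  | zero => rw [nonpos_iff_eq_zero.mp hβα]
  | add_one α ih =>
    rcases hβα.lt_or_eq with hlt | rfl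
    · exact (ih (Order.lt_add_one_iff.mp hlt)).trans (hG.subset_add_one α)
    · rfl
  | limit l hl ih =>
    rcases hβα.lt_or_eq with hlt | rfl
    · rw [hG.2.2 l hl]
      exact Set.subset_biUnion_of_mem (u := G) hlt
    · rfl

lemma subset_of_stable (hG : IsIter att G) {α : Ordinal} (hα : G α = G (α + 1))
    (β : Ordinal) : G β ⊆ G α := by
  induction β using Ordinal.limitRecOn with
  | zero => simp [hG.1]
  | add_one β ih =>
    rw [hG.2.1 β, hα, hG.2.1 α]
    exact defenseFn_mono att ih
  | limit l hl ih =>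
    rw [hG.2.2 l hl]
    exact Set.iUnion₂_subset ih

lemma exists_stable [Small.{u} (Set A)] (hG : IsIter att G) : ∃ α, G α = G (α + 1) := by
  by_contra! h
  refine not_injective_of_ordinal G (StrictMono.injective fun a b hab => ?_)
  exact ((hG.subset_add_one a).ssubset_of_ne (h a)).trans_le
    (hG.monotone (Order.add_one_le_of_lt hab))

lemma stable_iff [Small.{u} (Set A)] (hG : IsIter att G) {α : Ordinal} :
    G α = G (α + 1) ↔ sInf {β | G β = G (β + 1)} ≤ α := by
  refine ⟨fun h => csInf_le' h, fun h => ?_⟩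
  have hmax := hG.subset_of_stable (csInf_mem hG.exists_stable)
  exact ((hmax α).antisymm (hG.monotone h)).trans
    ((hmax (α + 1)).antisymm (hG.monotone (h.trans le_self_add))).symm

end IsIter

section Sigma

variable {ι : Type} {A : ι → Type} {att : ∀ i, A i → A i → Prop}

lemma preimage_sigmaMk_defenseFn_sigmaAtt (S : Set (Σ i, A i)) (i : ι) :
    Sigma.mk i ⁻¹' defenseFn (sigmaAtt att) S = defenseFn (att i) (Sigma.mk i ⁻¹' S) := by
  ext x
  constructor
  · intro hx y hy
    obtain ⟨⟨j, w⟩, hw, hj, hatt⟩ := hx ⟨i, y⟩ ⟨rfl, hy⟩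
    obtain rfl : j = i := hj
    exact ⟨w, hw, hatt⟩
  · rintro hx ⟨j, w⟩ ⟨hj, hatt⟩
    obtain rfl : j = i := hj
    obtain ⟨z, hz, hzw⟩ := hx w hatt
    exact ⟨⟨_, z⟩, hz, rfl, hzw⟩

lemma IsIter.preimage_sigmaMk {Gc : ∀ i, Ordinal → Set (A i)} {GU : Ordinal → Set (Σ i, A i)}
    (hGU : IsIter (sigmaAtt att) GU) (hGc : ∀ i, IsIter (att i) (Gc i)) (i : ι) (α : Ordinal) :
    Sigma.mk i ⁻¹' GU α = Gc i α := by
  induction α using Ordinal.limitRecOn with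
  | zero => rw [hGU.1, (hGc i).1, Set.preimage_empty]
  | add_one β ih => rw [hGU.2.1, (hGc i).2.1, preimage_sigmaMk_defenseFn_sigmaAtt, ih]
  | limit l hl ih =>
    rw [hGU.2.2 l hl, (hGc i).2.2 l hl, Set.preimage_iUnion₂]
    exact Set.iUnion₂_congr ih

lemma IsIter.sigma_eq_iff {Gc : ∀ i, Ordinal → Set (A i)} {GU : Ordinal → Set (Σ i, A i)}
    (hGU : IsIter (sigmaAtt att) GU) (hGc : ∀ i, IsIter (att i) (Gc i)) {α β : Ordinal} :
    GU α = GU β ↔ ∀ i, Gc i α = Gc i β := by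
  simp only [← hGU.preimage_sigmaMk hGc]
  exact ⟨fun h i => h ▸ rfl, fun h => Set.ext fun ⟨i, x⟩ => Set.ext_iff.mp (h i) x⟩

end Sigma

/-- The grounding ordinal of a disjoint union of AFs is the supremum of the
grounding ordinals of the components. (The grounding ordinal is the least
ordinal at which the iteration of the defense function stabilizes.) -/
theorem grounding_ordinal_sigma {ι : Type} {A : ι → Type}
    (att : ∀ i, A i → A i → Prop)
    (Gc : ∀ i, Ordinal → Set (A i)) (hGc : ∀ i, IsIter (att i) (Gc i))
    (GU : Ordinal → Set (Σ i, A i)) (hGU : IsIter (sigmaAtt att) GU) :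
    sInf {α : Ordinal | GU α = GU (α + 1)} =
      ⨆ i : ι, sInf {α : Ordinal | Gc i α = Gc i (α + 1)} := by
  have hstable : {α | GU α = GU (α + 1)} =
      Set.Ici (⨆ i, sInf {α | Gc i α = Gc i (α + 1)}) := by
    ext α
    rw [Set.mem_ofPred_eq, hGU.sigma_eq_iff hGc, Set.mem_Ici, Ordinal.iSup_le_iff]
    exact forall_congr' fun i => (hGc i).stable_iff
  rw [hstable, csInf_Ici]
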